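/- arXiv:2006.01528 — 5 statements merged into one kernel-verified Lean document; each statement's English description precedes it below -/
import Mathlib

section
/- If real numbers a,b,c,d (pairwise distinct) and polynomial values p(a),p(b),p(c),p(d) (all nonzero) satisfy the four secant relations p(a)/p(b) = (c-a)/(c-b), p(b)/p(c) = (d-b)/(d-c), p(c)/p(d) = (a-c)/(a-d), p(d)/p(a) = (b-d)/(b-a), then the cross ratio λ = ((c-a)(d-b))/((c-b)(d-a)) satisfies λ² = 1 - λ, hence λ = (-1+√5)/2 or λ = (-1-√5)/2. -/
/-!
Multiplying the four secant relations cancels the values `P`, leaving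
`((c - a) * (d - b)) ^ 2 = -((c - b) * (d - a)) * ((d - c) * (b - a))`.
Euler's four-point identity `(c - a) * (d - b) = (c - b) * (d - a) + (d - c) * (b - a)` turns
this into `X ^ 2 = Y ^ 2 - X * Y` for `X = (c - a) * (d - b)`, `Y = (c - b) * (d - a)`, i.e.
`λ ^ 2 = 1 - λ` for `λ = X / Y`, whose roots are `(-1 ± √5) / 2`.
-/

def crossRatio {K : Type*} [Field K] (a b c d : K) : K :=
  (c - a) * (d - b) / ((c - b) * (d - a))

theorem div_mul_div_mul_div_mul_div_self {K : Type*} [Field K] {x y z w : K}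
    (hx : x ≠ 0) (hy : y ≠ 0) (hz : z ≠ 0) (hw : w ≠ 0) :
    x / y * (y / z) * (z / w) * (w / x) = 1 := by
  rw [div_mul_div_cancel₀ hy, div_mul_div_cancel₀ hz, div_mul_div_cancel₀ hw, div_self hx]

theorem euler_four_point_identity {R : Type*} [CommRing R] (a b c d : R) :
    (c - a) * (d - b) = (c - b) * (d - a) + (d - c) * (b - a) := by
  ring

theorem crossRatio_sq_eq_one_sub_self {K : Type*} [Field K] {a b c d : K}
    (hab : a ≠ b) (hbc : b ≠ c) (hcd : c ≠ d) (had : a ≠ d)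
    (hcycle : (c - a) / (c - b) * ((d - b) / (d - c)) * ((a - c) / (a - d)) *
      ((b - d) / (b - a)) = 1) :
    crossRatio a b c d ^ 2 = 1 - crossRatio a b c d := by
  have hba : b - a ≠ 0 := sub_ne_zero.mpr hab.symm
  have hcb : c - b ≠ 0 := sub_ne_zero.mpr hbc.symm
  have hdc : d - c ≠ 0 := sub_ne_zero.mpr hcd.symm
  have hda : d - a ≠ 0 := sub_ne_zero.mpr had.symm
  have had' : a - d ≠ 0 := sub_ne_zero.mpr had
  have hsq : ((c - a) * (d - b)) ^ 2 = -((c - b) * (d - a)) * ((d - c) * (b - a)) := by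
    field_simp at hcycle
    linear_combination hcycle
  unfold crossRatio
  field_simp
  linear_combination hsq + (c - a) * (d - b) * euler_four_point_identity a b c d

theorem eq_neg_one_add_sqrt_five_div_two_or_of_sq_eq_one_sub_self {x : ℝ} (h : x ^ 2 = 1 - x) :
    x = (-1 + √5) / 2 ∨ x = (-1 - √5) / 2 := by
  have hdiscrim : discrim 1 1 (-1 : ℝ) = √5 * √5 := by
    rw [discrim, Real.mul_self_sqrt (by norm_num)]
    norm_num
  have hroots := (quadratic_eq_zero_iff one_ne_zero hdiscrim x).mp (by linear_combination h)
  simpa using hroots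

theorem secant_four_cycle_crossRatio_general (a b c d Pa Pb Pc Pd : ℝ)
    (hab : a ≠ b) (had : a ≠ d) (hbc : b ≠ c) (hcd : c ≠ d)
    (hPa : Pa ≠ 0) (hPb : Pb ≠ 0) (hPc : Pc ≠ 0) (hPd : Pd ≠ 0)
    (h1 : Pa / Pb = (c - a) / (c - b))
    (h2 : Pb / Pc = (d - b) / (d - c))
    (h3 : Pc / Pd = (a - c) / (a - d))
    (h4 : Pd / Pa = (b - d) / (b - a)) :
    (((c - a) * (d - b)) / ((c - b) * (d - a))) ^ 2
        = 1 - ((c - a) * (d - b)) / ((c - b) * (d - a)) ∧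
      (((c - a) * (d - b)) / ((c - b) * (d - a)) = (-1 + Real.sqrt 5) / 2 ∨
        ((c - a) * (d - b)) / ((c - b) * (d - a)) = (-1 - Real.sqrt 5) / 2) := by
  have hcycle := div_mul_div_mul_div_mul_div_self hPa hPb hPc hPd
  rw [h1, h2, h3, h4] at hcycle
  have hquad := crossRatio_sq_eq_one_sub_self hab hbc hcd had hcycle
  exact ⟨hquad, eq_neg_one_add_sqrt_five_div_two_or_of_sq_eq_one_sub_self hquad⟩

/-- If pairwise distinct reals `a,b,c,d` and nonzero values `Pa,Pb,Pc,Pd` satisfy the four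
secant relations, then the cross ratio `λ = ((c-a)(d-b))/((c-b)(d-a))` satisfies
`λ² = 1 - λ`, hence `λ = (-1+√5)/2` or `λ = (-1-√5)/2`. -/
theorem secant_four_cycle_crossRatio (a b c d Pa Pb Pc Pd : ℝ)
    (hab : a ≠ b) (hac : a ≠ c) (had : a ≠ d) (hbc : b ≠ c) (hbd : b ≠ d) (hcd : c ≠ d)
    (hPa : Pa ≠ 0) (hPb : Pb ≠ 0) (hPc : Pc ≠ 0) (hPd : Pd ≠ 0)
    (h1 : Pa / Pb = (c - a) / (c - b))
    (h2 : Pb / Pc = (d - b) / (d - c))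
    (h3 : Pc / Pd = (a - c) / (a - d))
    (h4 : Pd / Pa = (b - d) / (b - a)) :
    (((c - a) * (d - b)) / ((c - b) * (d - a))) ^ 2
        = 1 - ((c - a) * (d - b)) / ((c - b) * (d - a)) ∧
      (((c - a) * (d - b)) / ((c - b) * (d - a)) = (-1 + Real.sqrt 5) / 2 ∨
        ((c - a) * (d - b)) / ((c - b) * (d - a)) = (-1 - Real.sqrt 5) / 2) :=
  secant_four_cycle_crossRatio_general a b c d Pa Pb Pc Pd hab had hbc hcd hPa hPb hPc hPd h1 h2 h3
    h4
end

section
/- If (a,b)→(b,c)→(c,d)→(d,a) is a 4-cycle of the secant map for a polynomial p with a = min{a,b,c,d}, then the values p(a), p(b), p(c), p(d) are all nonzero. -/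
/-- The secant map associated to a real polynomial `p`. -/
noncomputable def secantMap (p : Polynomial ℝ) : ℝ × ℝ → ℝ × ℝ :=
  fun z => (z.2, z.2 - p.eval z.2 * (z.2 - z.1) / (p.eval z.2 - p.eval z.1))

/-- If `(a,b) → (b,c) → (c,d) → (d,a)` is a 4-cycle of the secant map (well defined at each
step, of minimal period 4) with `a = min{a,b,c,d}`, then `p(a), p(b), p(c), p(d)` are all
nonzero. -/
theorem secant_four_cycle_values_ne_zero (p : Polynomial ℝ) (a b c d : ℝ)
    (hab : p.eval a ≠ p.eval b) (hbc : p.eval b ≠ p.eval c)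
    (hcd : p.eval c ≠ p.eval d) (hda : p.eval d ≠ p.eval a)
    (s1 : secantMap p (a, b) = (b, c)) (s2 : secantMap p (b, c) = (c, d))
    (s3 : secantMap p (c, d) = (d, a)) (s4 : secantMap p (d, a) = (a, b))
    (hmin : a ≤ b ∧ a ≤ c ∧ a ≤ d)
    (hper : ((a, b) : ℝ × ℝ) ≠ (b, c) ∧ ((a, b) : ℝ × ℝ) ≠ (c, d) ∧
      ((a, b) : ℝ × ℝ) ≠ (d, a) ∧ ((b, c) : ℝ × ℝ) ≠ (c, d) ∧
      ((b, c) : ℝ × ℝ) ≠ (d, a) ∧ ((c, d) : ℝ × ℝ) ≠ (d, a)) :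
    p.eval a ≠ 0 ∧ p.eval b ≠ 0 ∧ p.eval c ≠ 0 ∧ p.eval d ≠ 0 := by
  have e1 : b - p.eval b * (b - a) / (p.eval b - p.eval a) = c := congrArg Prod.snd s1
  have e2 : c - p.eval c * (c - b) / (p.eval c - p.eval b) = d := congrArg Prod.snd s2
  have e3 : d - p.eval d * (d - c) / (p.eval d - p.eval c) = a := congrArg Prod.snd s3
  have e4 : a - p.eval a * (a - d) / (p.eval a - p.eval d) = b := congrArg Prod.snd s4
  refine ⟨?_, ?_, ?_, ?_⟩
  · intro h
    rw [h] at e4; simp at e4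
    exact hab (by rw [e4])
  · intro h
    rw [h] at e1; simp at e1
    exact hbc (by rw [e1])
  · intro h
    rw [h] at e2; simp at e2
    exact hcd (by rw [e2])
  · intro h
    rw [h] at e3; simp at e3
    exact hda (by rw [e3])
end

section
/- The configuration a < b < c < d is incompatible with a 4-cycle of the secant map: there exist no real numbers a < b < c < d and nonzero values P_a, P_b, P_c, P_d satisfying P_a/P_b = (c-a)/(c-b), P_b/P_c = (d-b)/(d-c), P_c/P_d = (a-c)/(a-d), P_d/P_a = (b-d)/(b-a). -/
/-- The configuration `a < b < c < d` is incompatible with a 4-cycle of the secant map: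
no real numbers `a < b < c < d` and nonzero values `Pa, Pb, Pc, Pd` satisfy the four
secant relations. -/
theorem secant_no_four_cycle_ordered :
    ¬ ∃ a b c d Pa Pb Pc Pd : ℝ,
      a < b ∧ b < c ∧ c < d ∧
      Pa ≠ 0 ∧ Pb ≠ 0 ∧ Pc ≠ 0 ∧ Pd ≠ 0 ∧
      Pa / Pb = (c - a) / (c - b) ∧
      Pb / Pc = (d - b) / (d - c) ∧
      Pc / Pd = (a - c) / (a - d) ∧
      Pd / Pa = (b - d) / (b - a) := by
  rintro ⟨a, b, c, d, Pa, Pb, Pc, Pd, hab, hbc, hcd, ha, hb, hc, hd,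
    h1, h2, h3, h4⟩
  have hprod : (c - a) / (c - b) * ((d - b) / (d - c)) * ((a - c) / (a - d)) *
      ((b - d) / (b - a)) = 1 := by
    rw [← h1, ← h2, ← h3, ← h4]
    field_simp
  have p1 : (0:ℝ) < (c - a) / (c - b) := by
    apply div_pos <;> linarith
  have p2 : (0:ℝ) < (d - b) / (d - c) := by
    apply div_pos <;> linarith
  have p3 : (0:ℝ) < (a - c) / (a - d) := by
    apply div_pos_of_neg_of_neg <;> linarith
  have p4 : (b - d) / (b - a) < 0 := by
    apply div_neg_of_neg_of_pos <;> linarith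
  nlinarith [mul_pos (mul_pos p1 p2) p3]
end

section
/- In a 4-cycle configuration with a < b < d < c (Type I), the secant relations force p(a) and p(b) to have the same sign, p(c) and p(d) to have the same sign, and p(a)p(c) < 0. -/
/-- In a 4-cycle configuration with `a < b < d < c` (Type I), the secant relations force
`p(a)` and `p(b)` to have the same sign, `p(c)` and `p(d)` to have the same sign, and
`p(a) p(c) < 0`. -/
theorem secant_four_cycle_typeI_signs (a b c d Pa Pb Pc Pd : ℝ)
    (hab : a < b) (hbd : b < d) (hdc : d < c)
    (hPa : Pa ≠ 0) (hPb : Pb ≠ 0) (hPc : Pc ≠ 0) (hPd : Pd ≠ 0)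
    (h1 : Pa / Pb = (c - a) / (c - b))
    (h2 : Pb / Pc = (d - b) / (d - c))
    (h3 : Pc / Pd = (a - c) / (a - d))
    (h4 : Pd / Pa = (b - d) / (b - a)) :
    0 < Pa * Pb ∧ 0 < Pc * Pd ∧ Pa * Pc < 0 := by
  have hr1 : 0 < Pa / Pb := by
    rw [h1]; exact div_pos (by linarith) (by linarith)
  have hr2 : Pb / Pc < 0 := by
    rw [h2]; exact div_neg_of_pos_of_neg (by linarith) (by linarith)
  have hr3 : 0 < Pc / Pd := by
    rw [h3]; exact div_pos_of_neg_of_neg (by linarith) (by linarith)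
  have e1 : Pa * Pb = (Pa / Pb) * (Pb * Pb) := by field_simp
  have e2 : Pb * Pc = (Pb / Pc) * (Pc * Pc) := by field_simp
  have e3 : Pc * Pd = (Pc / Pd) * (Pd * Pd) := by field_simp
  have hb2 : 0 < Pb * Pb := mul_self_pos.mpr hPb
  have hc2 : 0 < Pc * Pc := mul_self_pos.mpr hPc
  have hd2 : 0 < Pd * Pd := mul_self_pos.mpr hPd
  have p1 : 0 < Pa * Pb := e1 ▸ mul_pos hr1 hb2
  have p2 : Pb * Pc < 0 := e2 ▸ mul_neg_of_neg_of_pos hr2 hc2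
  have p3 : 0 < Pc * Pd := e3 ▸ mul_pos hr3 hd2
  exact ⟨p1, p3, by nlinarith [p1, p2, hb2]⟩
end

section
/- Let p'' have at most one zero in the interval (α₀,α₂). Then there do not exist four distinct points (x₁,p(x₁)), (w₀,p(w₀)), (w₁,p(w₁)), (w₂,p(w₂)) with w₀ < w₁ < w₂ and x₁, w₀, w₁, w₂ all in (α₀,α₂) that lie on a common line; equivalently, any point (x₁,y₁) has at most two preimages under the secant map with first coordinates in (α₀,α₂). -/
open Polynomial Set

/-- Rolle's theorem for polynomials. -/
lemma poly_rolle (q : Polynomial ℝ) {a b : ℝ} (hab : a < b)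
    (h : q.eval a = q.eval b) : ∃ c ∈ Set.Ioo a b, q.derivative.eval c = 0 := by
  obtain ⟨c, hc, hc'⟩ := exists_deriv_eq_zero hab (q.continuousOn) h
  refine ⟨c, hc, ?_⟩
  rw [← Polynomial.deriv]
  simpa using hc'

/-- Four ordered roots give two ordered zeros of the second derivative in between. -/
lemma four_roots_two_infl (q : Polynomial ℝ) {a b c d : ℝ}
    (h1 : a < b) (h2 : b < c) (h3 : c < d)
    (ha : q.eval a = 0) (hb : q.eval b = 0) (hc : q.eval c = 0) (hd : q.eval d = 0) :
    ∃ u v : ℝ, u ∈ Set.Ioo a d ∧ v ∈ Set.Ioo a d ∧ u < v ∧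
      q.derivative.derivative.eval u = 0 ∧ q.derivative.derivative.eval v = 0 := by
  obtain ⟨c₁, hc₁, hc₁'⟩ := poly_rolle q h1 (ha.trans hb.symm)
  obtain ⟨c₂, hc₂, hc₂'⟩ := poly_rolle q h2 (hb.trans hc.symm)
  obtain ⟨c₃, hc₃, hc₃'⟩ := poly_rolle q h3 (hc.trans hd.symm)
  have h12 : c₁ < c₂ := hc₁.2.trans hc₂.1
  have h23 : c₂ < c₃ := hc₂.2.trans hc₃.1
  obtain ⟨u, hu, hu'⟩ := poly_rolle q.derivative h12 (hc₁'.trans hc₂'.symm)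
  obtain ⟨v, hv, hv'⟩ := poly_rolle q.derivative h23 (hc₂'.trans hc₃'.symm)
  refine ⟨u, v, ⟨hc₁.1.trans hu.1, hu.2.trans (hc₂.2.trans h3)⟩,
    ⟨(h1.trans hc₂.1).trans hv.1, hv.2.trans hc₃.2⟩,
    (hu.2.trans hv.1), hu', hv'⟩

/-- If `p''` has at most one zero in `(α₀, α₂)`, then there is no configuration of four
distinct collinear points `(x₁,p(x₁)), (w₀,p(w₀)), (w₁,p(w₁)), (w₂,p(w₂))` with
`w₀ < w₁ < w₂` and all abscissas in `(α₀, α₂)`; equivalently, a point has at most two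
preimages under the secant map with first coordinate in `(α₀, α₂)`. -/
theorem secant_at_most_two_preimages (p : Polynomial ℝ) (α₀ α₂ : ℝ) (hα : α₀ < α₂)
    (hinfl : Set.Subsingleton {x : ℝ | x ∈ Set.Ioo α₀ α₂ ∧
      (Polynomial.derivative (Polynomial.derivative p)).eval x = 0}) :
    ¬ ∃ x₁ w₀ w₁ w₂ : ℝ,
      x₁ ∈ Set.Ioo α₀ α₂ ∧ w₀ ∈ Set.Ioo α₀ α₂ ∧ w₁ ∈ Set.Ioo α₀ α₂ ∧ w₂ ∈ Set.Ioo α₀ α₂ ∧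
      w₀ < w₁ ∧ w₁ < w₂ ∧ x₁ ≠ w₀ ∧ x₁ ≠ w₁ ∧ x₁ ≠ w₂ ∧
      ∃ m k : ℝ, p.eval x₁ = m * x₁ + k ∧ p.eval w₀ = m * w₀ + k ∧
        p.eval w₁ = m * w₁ + k ∧ p.eval w₂ = m * w₂ + k := by
  rintro ⟨x₁, w₀, w₁, w₂, hx₁, hw₀, hw₁, hw₂, h01, h12, hne0, hne1, hne2,
    m, k, e₁, e₀, eb, ec⟩
  set q : Polynomial ℝ := p - (Polynomial.C m * Polynomial.X + Polynomial.C k) with hq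
  have hq2 : q.derivative.derivative = p.derivative.derivative := by
    simp [hq]
  have qx : q.eval x₁ = 0 := by simp [hq, e₁]
  have q0 : q.eval w₀ = 0 := by simp [hq, e₀]
  have q1 : q.eval w₁ = 0 := by simp [hq, eb]
  have q2 : q.eval w₂ = 0 := by simp [hq, ec]
  -- helper for deriving a contradiction from four ordered roots all in Ioo α₀ α₂
  have key : ∀ a b c d : ℝ, a ∈ Set.Ioo α₀ α₂ → d ∈ Set.Ioo α₀ α₂ →
      a < b → b < c → c < d → q.eval a = 0 → q.eval b = 0 → q.eval c = 0 →
      q.eval d = 0 → False := by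
    intro a b c d hA hD h1 h2 h3 ra rb rc rd
    obtain ⟨u, v, hu, hv, huv, hu', hv'⟩ := four_roots_two_infl q h1 h2 h3 ra rb rc rd
    rw [hq2] at hu' hv'
    have hUm : u ∈ Set.Ioo α₀ α₂ := ⟨hA.1.trans hu.1, hu.2.trans hD.2⟩
    have hVm : v ∈ Set.Ioo α₀ α₂ := ⟨hA.1.trans hv.1, hv.2.trans hD.2⟩
    have := hinfl (Set.mem_setOf.mpr ⟨hUm, hu'⟩) (Set.mem_setOf.mpr ⟨hVm, hv'⟩)
    exact absurd this (ne_of_lt huv)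
  rcases lt_or_gt_of_ne hne0 with h | h
  · exact key x₁ w₀ w₁ w₂ hx₁ hw₂ h h01 h12 qx q0 q1 q2
  rcases lt_or_gt_of_ne hne1 with h' | h'
  · exact key w₀ x₁ w₁ w₂ hw₀ hw₂ h h' h12 q0 qx q1 q2
  rcases lt_or_gt_of_ne hne2 with h'' | h''
  · exact key w₀ w₁ x₁ w₂ hw₀ hw₂ h01 h' h'' q0 q1 qx q2
  · exact key w₀ w₁ w₂ x₁ hw₀ hx₁ h01 h12 h'' q0 q1 q2 qx
end
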